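/- arXiv:1602.08219 — 5 statements merged into one kernel-verified Lean document; each statement's English description precedes it below -/
import Mathlib

section
/- Let d ≥ 2 be an integer. For every polynomial P with complex coefficients there exist a unique polynomial Q with complex coefficients and a unique polynomial R with complex coefficients of degree at most d−2 such that P = Q' + d·X^{d−1}·Q + R. Equivalently, ℂ[z]e^{z^d} dz = d(ℂ[z]e^{z^d}) ⊕ ⊕_{j=0}^{d−2} ℂ·z^{j}e^{z^d} dz. -/
open Polynomial

/-! The map `Q ↦ Q' + A Q` raises degrees by exactly `deg A`, because the derivative term has
lower degree than `A Q`. Hence it is injective with image meeting the polynomials of degree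
`< deg A` only in `0`, and any `P` is reduced below degree `deg A` by repeatedly cancelling its
leading term with that of `Q' + A Q` for a suitable monomial `Q`. -/

section NoZeroDivisors

variable {S : Type*} [CommRing S] [NoZeroDivisors S] {A Q : S[X]}

theorem degree_derivative_lt_degree_mul (hA : 0 < A.degree) (hQ : Q ≠ 0) :
    (derivative Q).degree < (A * Q).degree :=
  calc (derivative Q).degree < Q.degree := degree_derivative_lt hQ
    _ ≤ A.degree + Q.degree := le_add_of_nonneg_left hA.le
    _ = (A * Q).degree := (degree_mul).symm

theorem degree_derivative_add_mul (hA : 0 < A.degree) (hQ : Q ≠ 0) :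
    (derivative Q + A * Q).degree = A.degree + Q.degree := by
  rw [degree_add_eq_right_of_degree_lt (degree_derivative_lt_degree_mul hA hQ), degree_mul]

theorem leadingCoeff_derivative_add_mul (hA : 0 < A.degree) (hQ : Q ≠ 0) :
    (derivative Q + A * Q).leadingCoeff = A.leadingCoeff * Q.leadingCoeff := by
  rw [leadingCoeff_add_of_degree_lt (degree_derivative_lt_degree_mul hA hQ), leadingCoeff_mul]

theorem eq_of_derivative_add_mul_add_eq {Q₁ Q₂ R₁ R₂ : S[X]} (hA : 0 < A.degree)
    (hR₁ : R₁.degree < A.degree) (hR₂ : R₂.degree < A.degree)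
    (h : derivative Q₁ + A * Q₁ + R₁ = derivative Q₂ + A * Q₂ + R₂) :
    Q₁ = Q₂ ∧ R₁ = R₂ := by
  have hQ : Q₁ = Q₂ := by
    by_contra hne
    have hdiff : derivative (Q₁ - Q₂) + A * (Q₁ - Q₂) = R₂ - R₁ := by
      rw [derivative_sub]; linear_combination h
    have hlt : (R₂ - R₁).degree < A.degree :=
      (degree_sub_le _ _).trans_lt (max_lt hR₂ hR₁)
    rw [← hdiff, degree_derivative_add_mul hA (sub_ne_zero.mpr hne)] at hlt
    exact hlt.not_ge (le_add_of_nonneg_right (zero_le_degree_iff.mpr (sub_ne_zero.mpr hne)))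
  subst hQ
  exact ⟨rfl, add_left_cancel h⟩

end NoZeroDivisors

section Field

variable {K : Type*} [Field K] {A : K[X]}

theorem exists_degree_sub_derivative_add_mul_lt (hA : 0 < A.degree) {P : K[X]}
    (hP : A.degree ≤ P.degree) : ∃ Q : K[X], (P - (derivative Q + A * Q)).degree < P.degree := by
  have hA0 : A ≠ 0 := ne_zero_of_degree_gt hA
  have hP0 : P ≠ 0 := ne_zero_of_degree_gt (hA.trans_le hP)
  have hc : P.leadingCoeff / A.leadingCoeff ≠ 0 := by simp [hA0, hP0]
  set Q := C (P.leadingCoeff / A.leadingCoeff) * X ^ (P.natDegree - A.natDegree)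
  have hQ0 : Q ≠ 0 := by simp [Q, hc]
  refine ⟨Q, degree_sub_lt_left ?_ hP0 ?_⟩
  · have hle : A.natDegree ≤ P.natDegree := natDegree_le_natDegree hP
    rw [degree_derivative_add_mul hA hQ0, degree_C_mul_X_pow _ hc, degree_eq_natDegree hA0,
      degree_eq_natDegree hP0]
    norm_cast
    omega
  · rw [leadingCoeff_derivative_add_mul hA hQ0, leadingCoeff_C_mul_X_pow,
      mul_div_cancel₀ _ (leadingCoeff_ne_zero.mpr hA0)]

theorem exists_derivative_add_mul_add (hA : 0 < A.degree) (P : K[X]) :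
    ∃ Q R : K[X], R.degree < A.degree ∧ P = derivative Q + A * Q + R := by
  by_cases hP : P.degree < A.degree
  · exact ⟨0, P, hP, by simp⟩
  obtain ⟨Q₀, hQ₀⟩ := exists_degree_sub_derivative_add_mul_lt hA (not_lt.mp hP)
  obtain ⟨Q, R, hR, hPQR⟩ := exists_derivative_add_mul_add hA (P - (derivative Q₀ + A * Q₀))
  exact ⟨Q₀ + Q, R, hR, by rw [derivative_add]; linear_combination hPQR⟩
termination_by P.degree

theorem existsUnique_derivative_add_mul_add (hA : 0 < A.degree) (P : K[X]) :
    ∃! QR : K[X] × K[X], QR.2.degree < A.degree ∧ P = derivative QR.1 + A * QR.1 + QR.2 := by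
  obtain ⟨Q, R, hR, hPQR⟩ := exists_derivative_add_mul_add hA P
  refine ⟨(Q, R), ⟨hR, hPQR⟩, ?_⟩
  rintro ⟨Q', R'⟩ ⟨hR', hPQR'⟩
  obtain ⟨rfl, rfl⟩ := eq_of_derivative_add_mul_add_eq hA hR' hR (hPQR'.symm.trans hPQR)
  rfl

end Field

/-- For `d ≥ 2`, every polynomial `P ∈ ℂ[X]` is uniquely `P = Q' + d X^(d-1) Q + R`
with `Q, R ∈ ℂ[X]` and `deg R ≤ d - 2`; i.e.
`ℂ[z]e^{z^d} dz = d(ℂ[z]e^{z^d}) ⊕ ⊕_{j=0}^{d-2} ℂ·z^j e^{z^d} dz`. -/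
theorem poly_exp_decomposition (d : ℕ) (hd : 2 ≤ d) (P : Polynomial ℂ) :
    ∃! QR : Polynomial ℂ × Polynomial ℂ,
      QR.2.degree ≤ (d - 2 : ℕ) ∧
      P = Polynomial.derivative QR.1
            + Polynomial.C (d : ℂ) * Polynomial.X ^ (d - 1) * QR.1 + QR.2 := by
  have hdeg : (C (d : ℂ) * X ^ (d - 1)).degree = ((d - 1 : ℕ) : WithBot ℕ) :=
    degree_C_mul_X_pow _ (Nat.cast_ne_zero.mpr (by omega))
  have hbound (R : ℂ[X]) : R.degree ≤ (d - 2 : ℕ) ↔ R.degree < (d - 1 : ℕ) := by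
    induction R.degree using WithBot.recBotCoe with
    | bot => simp
    | coe n => simp only [Nat.cast_withBot, WithBot.coe_le_coe, WithBot.coe_lt_coe]; omega
  simp only [hbound, ← hdeg]
  exact existsUnique_derivative_add_mul_add (by rw [hdeg]; norm_cast; omega) P
end

section
/- Let d ≥ 1 be an integer. For every Laurent polynomial g (i.e. a finite linear combination of integer powers z^{j}, j ∈ ℤ, with complex coefficients, viewed as a function on ℂ ∖ {0}) there exist a unique Laurent polynomial f and unique complex constants c_{−1}, c_{0}, …, c_{d−2} such that g(z) = f'(z) + d·z^{d−1}·f(z) + Σ_{j=−1}^{d−2} c_j z^{j} for all z ≠ 0. Equivalently, ℂ[z,1/z]e^{z^d} dz = d(ℂ[z,1/z]e^{z^d}) ⊕ ⊕_{j=−1}^{d−2} ℂ·z^{j}e^{z^d} dz. -/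
/-!
Write `L f = f' + d z^(d-1) f`, so that `d(f e^{z^d}) = (L f) e^{z^d} dz`; on coefficients,
`L z^j = j z^(j-1) + d z^(j+d-1)`. The monomials `z^k` with `k ≥ d - 1` resp. `k ≤ -2` are
congruent modulo the range of `L` to multiples of `z^(k-d)` resp. `z^(k+d)` (use `L z^(k-d+1)`
resp. `L z^(k+1)`), so by induction on the distance from `[-1, d-2]` every Laurent polynomial is
`L f` plus a combination of `z^(-1), …, z^(d-2)`. For uniqueness, if `f ≠ 0` has top degree
`M ≥ 0` then `L f` has the nonzero coefficient `d f_M` at `M + d - 1 ≥ d - 1`, and otherwise its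
bottom degree `m < 0` gives the nonzero coefficient `m f_m` at `m - 1 ≤ -2`. A Laurent polynomial
vanishing on `ℂ ∖ {0}` is zero (multiply by a power of `z` to get a polynomial), so the identity of
functions in the statement is an identity of coefficients.
-/

open Finsupp

noncomputable section

section Algebra

variable {R : Type*} [CommRing R]

theorem mapDomain_add_apply {M : Type*} [AddCommMonoid M] (m : ℤ) (f : ℤ →₀ M) (k : ℤ) :
    mapDomain (· + m) f k = f (k - m) := by
  simpa using mapDomain_apply (add_left_injective m) f (k - m)

def laurentDeriv : (ℤ →₀ R) →ₗ[R] ℤ →₀ R :=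
  lsum R fun j => (j : R) • lsingle (j - 1)

theorem laurentDeriv_single (j : ℤ) (c : R) :
    laurentDeriv (single j c) = single (j - 1) (j * c) := by
  simp [laurentDeriv, smul_single]

theorem laurentDeriv_apply (f : ℤ →₀ R) (k : ℤ) : laurentDeriv f k = (k + 1) * f (k + 1) := by
  induction f using Finsupp.induction_linear with
  | zero => simp
  | add f g hf hg => simp only [map_add, Finsupp.add_apply, hf, hg, mul_add]
  | single j c =>
    rcases eq_or_ne j (k + 1) with rfl | hj
    · simp [laurentDeriv_single]
    · simp [laurentDeriv_single, hj, show j - 1 ≠ k by omega]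

/-- `f ↦ e^{-z^d} (f e^{z^d})'` on coefficients. -/
def twistedDeriv (d : ℕ) : (ℤ →₀ R) →ₗ[R] ℤ →₀ R :=
  laurentDeriv + (d : R) • lmapDomain R R (· + ((d : ℤ) - 1))

theorem twistedDeriv_apply (d : ℕ) (f : ℤ →₀ R) (k : ℤ) :
    twistedDeriv d f k = (k + 1) * f (k + 1) + d * f (k + 1 - d) := by
  simp [twistedDeriv, laurentDeriv_apply, mapDomain_add_apply, sub_sub_eq_add_sub]

theorem twistedDeriv_single_one (d : ℕ) (j : ℤ) :
    twistedDeriv d (single j 1) = single (j - 1) (j : R) + single (j + (d - 1)) (d : R) := by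
  simp [twistedDeriv, laurentDeriv_single, smul_single]

end Algebra

section Decomposition

variable {K : Type*} [Field K] [CharZero K] {d : ℕ}

theorem exists_twistedDeriv_apply_ne_zero (hd : 1 ≤ d) {f : ℤ →₀ K} (hf : f ≠ 0) :
    ∃ k ∉ Set.Icc (-1 : ℤ) (d - 2), twistedDeriv d f k ≠ 0 := by
  have hne : f.support.Nonempty := support_nonempty_iff.mpr hf
  set M := f.support.max' hne
  set m := f.support.min' hne
  have hmM : m ≤ M := f.support.min'_le _ (f.support.max'_mem hne)
  by_cases hM : 0 ≤ M
  · have hfM : f M ≠ 0 := mem_support_iff.mp (f.support.max'_mem hne)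
    have hfMd : f (M + d) = 0 :=
      notMem_support_iff.mp fun h => by have := f.support.le_max' _ h; omega
    refine ⟨M + d - 1, fun hk => by simp only [Set.mem_Icc] at hk; omega, ?_⟩
    rw [twistedDeriv_apply, sub_add_cancel, hfMd, add_sub_cancel_right, mul_zero, zero_add]
    exact mul_ne_zero (Nat.cast_ne_zero.mpr (by omega)) hfM
  · have hfm : f m ≠ 0 := mem_support_iff.mp (f.support.min'_mem hne)
    have hfmd : f (m - d) = 0 :=
      notMem_support_iff.mp fun h => by have := f.support.min'_le _ h; omega
    refine ⟨m - 1, fun hk => by simp only [Set.mem_Icc] at hk; omega, ?_⟩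
    rw [twistedDeriv_apply, show m - 1 + 1 - d = m - d by ring, hfmd, sub_add_cancel, mul_zero,
      add_zero]
    exact mul_ne_zero (by exact_mod_cast (show m - 1 + 1 ≠ 0 by omega)) hfm

theorem eq_of_twistedDeriv_add_eq (hd : 1 ≤ d) {f f' c c' : ℤ →₀ K}
    (hc : c ∈ supported K K (Set.Icc (-1 : ℤ) (d - 2)))
    (hc' : c' ∈ supported K K (Set.Icc (-1 : ℤ) (d - 2)))
    (h : twistedDeriv d f + c = twistedDeriv d f' + c') : f = f' ∧ c = c' := by
  obtain rfl : f = f' := by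
    by_contra hff
    obtain ⟨k, hk, hLk⟩ := exists_twistedDeriv_apply_ne_zero hd (sub_ne_zero.mpr hff)
    have hck : (c' - c) k = 0 :=
      notMem_support_iff.mp fun hmem => hk (mem_supported K _ |>.mp (sub_mem hc' hc) hmem)
    have hdiff : twistedDeriv d (f - f') = c' - c := by
      rw [map_sub, sub_eq_sub_iff_add_eq_add, h, add_comm]
    exact hLk (hdiff ▸ hck)
  exact ⟨rfl, add_left_cancel h⟩

theorem single_mem_range_twistedDeriv_sup_supported (hd : 1 ≤ d) (k : ℤ) :
    single k (1 : K) ∈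
      LinearMap.range (twistedDeriv d) ⊔ supported K K (Set.Icc (-1 : ℤ) (d - 2)) := by
  set V := LinearMap.range (twistedDeriv d) ⊔ supported K K (Set.Icc (-1 : ℤ) (d - 2))
  have hL (j : ℤ) : twistedDeriv d (single j (1 : K)) ∈ V :=
    Submodule.mem_sup_left (LinearMap.mem_range_self _ _)
  if hk : (d : ℤ) - 1 ≤ k then
    have key : (d : K) • single k 1 = twistedDeriv d (single (k - d + 1) (1 : K))
        - ((k - d + 1 : ℤ) : K) • single (k - d) 1 := by
      rw [twistedDeriv_single_one, show k - d + 1 - 1 = k - d by ring,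
        show k - d + 1 + (d - 1) = k by ring, smul_single_one, smul_single_one]
      abel
    have hd0 : (d : K) ≠ 0 := Nat.cast_ne_zero.mpr (by omega)
    rw [← V.smul_mem_iff hd0, key]
    exact sub_mem (hL _) (V.smul_mem _ (single_mem_range_twistedDeriv_sup_supported hd (k - d)))
  else if hk' : k ≤ -2 then
    have key : ((k + 1 : ℤ) : K) • single k 1 =
        twistedDeriv d (single (k + 1) (1 : K)) - (d : K) • single (k + d) 1 := by
      rw [twistedDeriv_single_one, show k + 1 - 1 = k by ring,
        show k + 1 + (d - 1) = k + d by ring, smul_single_one, smul_single_one]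
      abel
    have hk0 : ((k + 1 : ℤ) : K) ≠ 0 := Int.cast_ne_zero.mpr (by omega)
    rw [← V.smul_mem_iff hk0, key]
    exact sub_mem (hL _) (V.smul_mem _ (single_mem_range_twistedDeriv_sup_supported hd (k + d)))
  else
    exact Submodule.mem_sup_right (single_mem_supported K _ ⟨by omega, by omega⟩)
termination_by (k - (d - 2)).toNat + (-1 - k).toNat

theorem range_twistedDeriv_sup_supported (hd : 1 ≤ d) :
    LinearMap.range (twistedDeriv d) ⊔ supported K K (Set.Icc (-1 : ℤ) (d - 2)) = ⊤ := by
  rw [eq_top_iff]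
  rintro g -
  induction g using Finsupp.induction_linear with
  | zero => exact zero_mem _
  | add f g hf hg => exact add_mem hf hg
  | single k c =>
    simpa using Submodule.smul_mem _ c (single_mem_range_twistedDeriv_sup_supported hd k)

end Decomposition

section Evaluation

theorem sum_mul_zpow_eq_linearCombination {K : Type*} [Field K] (a : ℤ →₀ K) (z : K) :
    ∑ j ∈ a.support, a j * z ^ j = linearCombination K (z ^ ·) a := by
  simp [linearCombination_apply, Finsupp.sum]

theorem linearCombination_zpow_mapDomain_add {K : Type*} [Field K] {z : K} (hz : z ≠ 0) (m : ℤ)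
    (f : ℤ →₀ K) :
    linearCombination K (z ^ ·) (mapDomain (· + m) f) = z ^ m * linearCombination K (z ^ ·) f := by
  induction f using Finsupp.induction_linear with
  | zero => simp
  | add f g hf hg => rw [mapDomain_add, map_add, map_add, hf, hg, mul_add]
  | single j c =>
    simp only [mapDomain_single, linearCombination_single, smul_eq_mul, zpow_add₀ hz]
    ring

open Polynomial in
theorem exists_polynomial_eval_eq_pow_mul_linearCombination_zpow {K : Type*} [Field K]
    (a : ℤ →₀ K) :
    ∃ (N : ℕ) (P : K[X]), (∀ z : K, z ≠ 0 → P.eval z = z ^ N * linearCombination K (z ^ ·) a) ∧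
      ∀ k ∈ a.support, P.coeff (k + N).toNat = a k := by
  obtain ⟨b, hb⟩ := a.support.bddBelow
  obtain ⟨N, hN⟩ : ∃ N : ℕ, ∀ j ∈ a.support, -(N : ℤ) ≤ j :=
    ⟨b.natAbs, fun j hj => by have := hb hj; omega⟩
  refine ⟨N, ∑ j ∈ a.support, monomial (j + N).toNat (a j), fun z hz => ?_, fun k hk => ?_⟩
  · rw [eval_finsetSum, ← sum_mul_zpow_eq_linearCombination, Finset.mul_sum]
    refine Finset.sum_congr rfl fun j hj => ?_
    rw [eval_monomial, ← zpow_natCast, Int.toNat_of_nonneg (by linarith [hN j hj]), zpow_add₀ hz,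
      zpow_natCast]
    ring
  · rw [finsetSum_coeff, Finset.sum_eq_single k (fun j hj hjk => ?_) (fun h => absurd hk h),
      coeff_monomial, if_pos rfl]
    rw [coeff_monomial, if_neg]
    have := hN j hj; have := hN k hk
    omega

theorem eq_zero_of_linearCombination_zpow_eq_zero {K : Type*} [Field K] [Infinite K]
    {a : ℤ →₀ K} (h : ∀ z : K, z ≠ 0 → linearCombination K (z ^ ·) a = 0) : a = 0 := by
  obtain ⟨N, P, hP, hcoeff⟩ := exists_polynomial_eval_eq_pow_mul_linearCombination_zpow a
  have hP0 : P = 0 := Polynomial.eq_zero_of_infinite_isRoot P <|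
    (Set.finite_singleton 0).infinite_compl.mono fun z hz => by simp [hP z hz, h z hz]
  ext k
  by_contra hk
  exact hk ((hcoeff k (mem_support_iff.mpr hk)).symm.trans (by simp [hP0]))

variable {𝕜 : Type*} [NontriviallyNormedField 𝕜] {d : ℕ}

theorem hasDerivAt_linearCombination_zpow (f : ℤ →₀ 𝕜) {z : 𝕜} (hz : z ≠ 0) :
    HasDerivAt (fun w => linearCombination 𝕜 (w ^ ·) f)
      (linearCombination 𝕜 (z ^ ·) (laurentDeriv f)) z := by
  induction f using Finsupp.induction_linear with
  | zero => simpa using hasDerivAt_const z (0 : 𝕜)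
  | add f g hf hg => simpa only [map_add] using hf.fun_add hg
  | single j c =>
    simp only [linearCombination_single, laurentDeriv_single, smul_eq_mul]
    exact ((hasDerivAt_zpow j z (.inl hz)).const_mul c).congr_deriv (by ring)

theorem linearCombination_zpow_twistedDeriv (hd : 1 ≤ d) (f : ℤ →₀ 𝕜) {z : 𝕜} (hz : z ≠ 0) :
    linearCombination 𝕜 (z ^ ·) (twistedDeriv d f) =
      deriv (fun w => linearCombination 𝕜 (w ^ ·) f) z
        + d * z ^ (d - 1) * linearCombination 𝕜 (z ^ ·) f := by
  have hpow : z ^ ((d : ℤ) - 1) = z ^ (d - 1) := by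
    rw [← zpow_natCast, Nat.cast_sub hd, Nat.cast_one]
  rw [(hasDerivAt_linearCombination_zpow f hz).deriv, twistedDeriv, LinearMap.add_apply,
    LinearMap.smul_apply, map_add, map_smul, lmapDomain_apply,
    linearCombination_zpow_mapDomain_add hz, hpow, smul_eq_mul, mul_assoc]

theorem twistedDeriv_add_eq_iff (hd : 1 ≤ d) {f c g : ℤ →₀ 𝕜} :
    twistedDeriv d f + c = g ↔ ∀ z : 𝕜, z ≠ 0 →
      linearCombination 𝕜 (z ^ ·) g = deriv (fun w => linearCombination 𝕜 (w ^ ·) f) z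
        + d * z ^ (d - 1) * linearCombination 𝕜 (z ^ ·) f + linearCombination 𝕜 (z ^ ·) c := by
  constructor
  · rintro rfl z hz
    rw [map_add, linearCombination_zpow_twistedDeriv hd f hz]
  · intro h
    refine (sub_eq_zero.mp (eq_zero_of_linearCombination_zpow_eq_zero fun z hz => ?_)).symm
    rw [map_sub, map_add, linearCombination_zpow_twistedDeriv hd f hz, h z hz, sub_self]

end Evaluation

end

/-- For `d ≥ 1`, every Laurent polynomial `g` (given by its finitely supported
coefficient function `g : ℤ →₀ ℂ`, viewed as the function `z ↦ ∑ g j * z^j` on `ℂ \ {0}`)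
can be written uniquely as `g(z) = f'(z) + d z^(d-1) f(z) + ∑_{j=-1}^{d-2} c_j z^j` for all
`z ≠ 0`, with `f` a Laurent polynomial and `c_j ∈ ℂ`; i.e.
`ℂ[z,1/z]e^{z^d} dz = d(ℂ[z,1/z]e^{z^d}) ⊕ ⊕_{j=-1}^{d-2} ℂ·z^j e^{z^d} dz`. -/
theorem laurent_exp_decomposition (d : ℕ) (hd : 1 ≤ d) (g : ℤ →₀ ℂ) :
    ∃! p : (ℤ →₀ ℂ) × (ℤ →₀ ℂ),
      p.2.support ⊆ Finset.Icc (-1 : ℤ) ((d : ℤ) - 2) ∧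
      ∀ z : ℂ, z ≠ 0 →
        (∑ j ∈ g.support, g j * z ^ j) =
          deriv (fun w : ℂ => ∑ j ∈ p.1.support, p.1 j * w ^ j) z
            + (d : ℂ) * z ^ (d - 1) * (∑ j ∈ p.1.support, p.1 j * z ^ j)
            + ∑ j ∈ p.2.support, p.2 j * z ^ j := by
  simp only [sum_mul_zpow_eq_linearCombination, ← twistedDeriv_add_eq_iff hd, ← Finset.coe_subset,
    Finset.coe_Icc, ← mem_supported ℂ]
  have hg : g ∈ LinearMap.range (twistedDeriv d) ⊔ supported ℂ ℂ (Set.Icc (-1 : ℤ) (d - 2)) := by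
    simp [range_twistedDeriv_sup_supported hd]
  obtain ⟨_, ⟨f, rfl⟩, c, hc, hfc⟩ := Submodule.mem_sup.mp hg
  refine ⟨(f, c), ⟨hc, hfc⟩, fun p ⟨hp, hpg⟩ => ?_⟩
  obtain ⟨hf, hc⟩ := eq_of_twistedDeriv_add_eq hd hp hc (hpg.trans hfc.symm)
  exact Prod.ext hf hc
end

section
/- Let d ≥ 1 be an integer, let R > 0, and let g : ℂ → ℂ be holomorphic on {z : |z| > R} with polynomial growth at infinity (there exist C > 0 and m ∈ ℕ with |g(z)| ≤ C|z|^m for all |z| > R). Then there exist R' ≥ R, a function f holomorphic on {z : |z| > R'} with polynomial growth at infinity, and complex constants c_{−1}, c_{0}, …, c_{d−2} such that g(z) = f'(z) + d·z^{d−1}·f(z) + Σ_{j=−1}^{d−2} c_j z^{j} for all |z| > R'. Equivalently, every differential g(z)e^{z^d} dz with g meromorphic at ∞ is congruent, modulo differentials d(f(z)e^{z^d}) with f meromorphic at ∞, to a combination of z^{j}e^{z^d} dz, −1 ≤ j ≤ d−2. -/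
/-!
By the growth bound, `w ↦ w^m g(1/w)` has a removable singularity at `0`, so `g` has a Laurent
expansion `∑ p_n z^(m-n)` at `∞` with geometrically bounded coefficients. Write
`L f = f' + d z^(d-1) f`. Since `L (z^k) = d z^(k+d-1) + k z^(k-1)`, the polynomial part of the
expansion reduces modulo the image of `L` to degree `≤ d-2`. For the tail `∑ b_k z^-(k+2)` take
`f = ∑ a_k z^-(k+1)`: comparing coefficients, `L f` differs from the tail by monomials `z^j`,
`-1 ≤ j ≤ d-2`, as soon as `d a_(k+d) - (k+1) a_k = b_k`. Solving this recurrence upwards,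
`a_k = -∑_j b_(k+jd) d^j / ((k+1)(k+1+d)⋯(k+1+jd))`, the `j!` hidden in the denominator keeps
`a_k` geometrically bounded, so the series for `f` converges near `∞`.
-/

open Finset Polynomial Metric
open scoped Nat

theorem Polynomial.exists_degree_sub_derivative_add_lt {K : Type*} [Field K] [CharZero K]
    {d : ℕ} (hd : 0 < d) (q : K[X]) :
    ∃ p : K[X], (q - (derivative p + C (d : K) * X ^ (d - 1) * p)).degree < ↑(d - 1) := by
  suffices h : ∀ N : ℕ, ∀ q : K[X], q.degree < N →
      ∃ p : K[X], (q - (derivative p + C (d : K) * X ^ (d - 1) * p)).degree < ↑(d - 1) from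
    h _ q (degree_le_natDegree.trans_lt (by exact_mod_cast Nat.lt_succ_self _))
  intro N
  induction N with
  | zero => exact fun q hq ↦ ⟨0, by simpa using hq.trans_le (by exact_mod_cast Nat.zero_le _)⟩
  | succ N ih =>
    intro q hq
    rcases lt_or_ge N (d - 1) with hN | hN
    · exact ⟨0, by simpa using hq.trans_le (by exact_mod_cast hN)⟩
    -- `L p₁` has the same coefficient of `X^N` as `q`, where `L p = p' + d X^(d-1) p`
    set p₁ : K[X] := monomial (N + 1 - d) (q.coeff N / d)
    have hdrop : (q - (derivative p₁ + C (d : K) * X ^ (d - 1) * p₁)).degree < ↑N := by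
      have hmul : C (d : K) * X ^ (d - 1) * p₁ = monomial N (q.coeff N) := by
        rw [C_mul_X_pow_eq_monomial, monomial_mul_monomial, show d - 1 + (N + 1 - d) = N by omega,
          mul_div_cancel₀ _ (Nat.cast_ne_zero.2 hd.ne')]
      rw [hmul, degree_lt_iff_coeff_zero]
      intro n hn
      have hder : (derivative p₁).coeff n = 0 := by
        rw [coeff_derivative, coeff_monomial, if_neg (by omega), zero_mul]
      rcases hn.eq_or_lt with rfl | hn
      · simp [hder]
      · rw [degree_lt_iff_coeff_zero] at hq
        simp [hder, coeff_monomial, hn.ne, hq n hn]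
    obtain ⟨p₂, hp₂⟩ := ih _ hdrop
    refine ⟨p₁ + p₂, ?_⟩
    convert hp₂ using 2
    simp only [derivative_add]
    ring

theorem pow_mul_factorial_le_prod_add_mul (d k j : ℕ) :
    d ^ j * j ! ≤ ∏ i ∈ range (j + 1), (k + 1 + i * d) := by
  induction j with
  | zero => simp
  | succ j ih =>
    rw [prod_range_succ, pow_succ, Nat.factorial_succ]
    calc d ^ j * d * ((j + 1) * j !) = d ^ j * j ! * ((j + 1) * d) := by ring
      _ ≤ (∏ i ∈ range (j + 1), (k + 1 + i * d)) * (k + 1 + (j + 1) * d) := by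
        gcongr; omega

theorem Real.hasSum_pow_div_factorial (x : ℝ) :
    HasSum (fun n ↦ x ^ n / n.factorial) (Real.exp x) := by
  rw [Real.exp_eq_exp_ℝ]
  exact NormedSpace.expSeries_div_hasSum_exp x

noncomputable def recurrenceTerm (d : ℕ) (b : ℕ → ℂ) (k j : ℕ) : ℂ :=
  b (k + j * d) * (d : ℂ) ^ j / ((∏ i ∈ range (j + 1), (k + 1 + i * d) : ℕ) : ℂ)

theorem norm_recurrenceTerm_le {d : ℕ} {b : ℕ → ℂ} {A ρ : ℝ}
    (hb : ∀ n, ‖b n‖ ≤ A * ρ ^ n) (k j : ℕ) :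
    ‖recurrenceTerm d b k j‖ ≤ A * ρ ^ k * ((ρ ^ d) ^ j / j !) := by
  set P : ℕ := ∏ i ∈ range (j + 1), (k + 1 + i * d)
  have hP : (0 : ℝ) < P := by exact_mod_cast prod_pos fun i _ ↦ by omega
  have hle : ((d : ℝ) ^ j * j !) ≤ P := by exact_mod_cast pow_mul_factorial_le_prod_add_mul d k j
  rw [recurrenceTerm, norm_div, norm_mul, norm_pow, Complex.norm_natCast, Complex.norm_natCast]
  calc ‖b (k + j * d)‖ * d ^ j / P ≤ ‖b (k + j * d)‖ / j ! := by
        rw [div_le_div_iff₀ hP (by positivity), mul_assoc]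
        gcongr
    _ ≤ A * ρ ^ (k + j * d) / j ! := by gcongr; exact hb _
    _ = A * ρ ^ k * ((ρ ^ d) ^ j / j !) := by rw [pow_add, mul_comm j, pow_mul]; ring

theorem mul_recurrenceTerm_succ (d : ℕ) (b : ℕ → ℂ) (k j : ℕ) :
    (k + 1 : ℂ) * recurrenceTerm d b k (j + 1) = d * recurrenceTerm d b (k + d) j := by
  have hsplit : ∏ i ∈ range (j + 2), (k + 1 + i * d)
      = (∏ i ∈ range (j + 1), (k + d + 1 + i * d)) * (k + 1) := by
    rw [prod_range_succ']
    congr 1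
    · exact prod_congr rfl fun i _ ↦ by ring
    · ring
  have hne : ((∏ i ∈ range (j + 1), (k + d + 1 + i * d) : ℕ) : ℂ) ≠ 0 := by
    exact_mod_cast (prod_pos fun i _ ↦ by omega).ne'
  rw [recurrenceTerm, recurrenceTerm, hsplit, show k + (j + 1) * d = k + d + j * d by ring]
  push_cast at hne ⊢
  field_simp
  ring

theorem mul_recurrenceTerm_zero (d : ℕ) (b : ℕ → ℂ) (k : ℕ) :
    (k + 1 : ℂ) * recurrenceTerm d b k 0 = b k := by
  rw [recurrenceTerm]
  push_cast
  field_simp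
  simp

theorem exists_bounded_solution_of_recurrence (d : ℕ) {b : ℕ → ℂ} {A ρ : ℝ}
    (hb : ∀ n, ‖b n‖ ≤ A * ρ ^ n) :
    ∃ a : ℕ → ℂ, (∀ k, ‖a k‖ ≤ A * Real.exp (ρ ^ d) * ρ ^ k) ∧
      ∀ k, (d : ℂ) * a (k + d) - (k + 1) * a k = b k := by
  have hexp := Real.hasSum_pow_div_factorial (ρ ^ d)
  have hsum : ∀ k, Summable (recurrenceTerm d b k) := fun k ↦
    .of_norm_bounded (hexp.summable.mul_left _) (norm_recurrenceTerm_le hb k)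
  refine ⟨fun k ↦ -∑' j, recurrenceTerm d b k j, fun k ↦ ?_, fun k ↦ ?_⟩
  · rw [norm_neg, mul_right_comm]
    exact tsum_of_norm_bounded (hexp.mul_left _) (norm_recurrenceTerm_le hb k)
  · have hk : (k + 1 : ℂ) * ∑' j, recurrenceTerm d b k j
        = b k + d * ∑' j, recurrenceTerm d b (k + d) j := by
      rw [← tsum_mul_left, (hsum k).mul_left _ |>.tsum_eq_zero_add, mul_recurrenceTerm_zero]
      simp_rw [mul_recurrenceTerm_succ, tsum_mul_left]
    linear_combination hk

noncomputable def invPowSeries (a : ℕ → ℂ) (z : ℂ) : ℂ := ∑' k : ℕ, a k * z ^ (-((k : ℤ) + 1))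

section invPowSeries

variable {a : ℕ → ℂ} {A ρ r : ℝ}

theorem norm_mul_zpow_neg_le (ha : ∀ k, ‖a k‖ ≤ A * ρ ^ k) (hr : 0 < r) {z : ℂ} (hz : r ≤ ‖z‖)
    (k : ℕ) : ‖a k * z ^ (-((k : ℤ) + 1))‖ ≤ A * ρ ^ k * (r ^ (k + 1))⁻¹ := by
  rw [norm_mul, norm_zpow, zpow_neg, show (k : ℤ) + 1 = (k + 1 : ℕ) by push_cast; ring,
    zpow_natCast]
  exact mul_le_mul (ha k) (by gcongr) (by positivity) ((norm_nonneg _).trans (ha k))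

theorem summable_mul_pow_mul_inv_pow (hρ : 0 ≤ ρ) (hρr : ρ < r) :
    Summable fun k : ℕ ↦ A * ρ ^ k * (r ^ (k + 1))⁻¹ := by
  have hr : 0 < r := hρ.trans_lt hρr
  refine ((summable_geometric_of_lt_one (div_nonneg hρ hr.le) ((div_lt_one hr).2 hρr)).mul_left
    (A * r⁻¹)).congr fun k ↦ ?_
  rw [div_pow, pow_succ]
  field_simp

theorem norm_invPowSeries_le (ha : ∀ k, ‖a k‖ ≤ A * ρ ^ k) (hρ : 0 ≤ ρ) (hρr : ρ < r) {z : ℂ}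
    (hz : r ≤ ‖z‖) : ‖invPowSeries a z‖ ≤ ∑' k : ℕ, A * ρ ^ k * (r ^ (k + 1))⁻¹ :=
  tsum_of_norm_bounded (summable_mul_pow_mul_inv_pow hρ hρr).hasSum
    (norm_mul_zpow_neg_le ha (hρ.trans_lt hρr) hz)

theorem differentiableOn_mul_zpow_neg (c : ℂ) (k : ℕ) (hr : 0 < r) :
    DifferentiableOn ℂ (fun w : ℂ ↦ c * w ^ (-((k : ℤ) + 1))) {w | r < ‖w‖} := fun _ hw ↦
  ((differentiableAt_zpow.2 (.inl (norm_pos_iff.1 (hr.trans hw)))).const_mul c)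
    |>.differentiableWithinAt

theorem differentiableOn_invPowSeries (ha : ∀ k, ‖a k‖ ≤ A * ρ ^ k) (hρ : 0 ≤ ρ) (hρr : ρ < r) :
    DifferentiableOn ℂ (invPowSeries a) {w | r < ‖w‖} :=
  Complex.differentiableOn_tsum_of_summable_norm (summable_mul_pow_mul_inv_pow hρ hρr)
    (fun k ↦ differentiableOn_mul_zpow_neg (a k) k (hρ.trans_lt hρr))
    (isOpen_lt continuous_const continuous_norm)
    fun k _ hw ↦ norm_mul_zpow_neg_le ha (hρ.trans_lt hρr) hw.out.le k

theorem hasSum_deriv_invPowSeries (ha : ∀ k, ‖a k‖ ≤ A * ρ ^ k) (hρ : 0 ≤ ρ) (hρr : ρ < r)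
    {z : ℂ} (hz : r < ‖z‖) :
    HasSum (fun k : ℕ ↦ -((k : ℂ) + 1) * a k * z ^ (-((k : ℤ) + 2)))
      (deriv (invPowSeries a) z) := by
  have hr : 0 < r := hρ.trans_lt hρr
  refine (Complex.hasSum_deriv_of_summable_norm (summable_mul_pow_mul_inv_pow hρ hρr)
    (fun k ↦ differentiableOn_mul_zpow_neg (a k) k hr) (isOpen_lt continuous_const continuous_norm)
    (fun k _ hw ↦ norm_mul_zpow_neg_le ha hr hw.out.le k) hz).congr_fun fun k ↦ ?_
  rw [deriv_const_mul _ (differentiableAt_zpow.2 (.inl (norm_pos_iff.1 (hr.trans hz)))),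
    deriv_zpow]
  push_cast
  ring_nf

/-- Multiplying by `d z^{d-1}` shifts the series by `d` places; the `d` terms shifted out are the
monomials `z^{d-2-k}`, `0 ≤ k < d`. -/
theorem hasSum_deriv_add_mul_invPowSeries (d : ℕ) {b : ℕ → ℂ} (ha : ∀ k, ‖a k‖ ≤ A * ρ ^ k)
    (hρ : 0 ≤ ρ) (hρr : ρ < r) (hrec : ∀ k, (d : ℂ) * a (k + d) - (k + 1) * a k = b k) {z : ℂ}
    (hz : r < ‖z‖) :
    HasSum (fun k : ℕ ↦ b k * z ^ (-((k : ℤ) + 2)))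
      (deriv (invPowSeries a) z + d * z ^ ((d : ℤ) - 1) * invPowSeries a z -
        ∑ k ∈ range d, d * a k * z ^ ((d : ℤ) - 2 - k)) := by
  have hr : 0 < r := hρ.trans_lt hρr
  have hz0 : z ≠ 0 := norm_pos_iff.1 (hr.trans hz)
  have hzpow : ∀ i : ℤ, z ^ ((d : ℤ) - 1) * z ^ (-(i + 1)) = z ^ ((d : ℤ) - 2 - i) := fun i ↦ by
    rw [← zpow_add₀ hz0]; ring_nf
  have hS : HasSum (fun k : ℕ ↦ a k * z ^ (-((k : ℤ) + 1))) (invPowSeries a z) :=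
    (Summable.of_norm_bounded (summable_mul_pow_mul_inv_pow hρ (hρr.trans hz))
      (norm_mul_zpow_neg_le ha (hr.trans hz) le_rfl)).hasSum
  have hshift := (hasSum_nat_add_iff' d).2 (hS.mul_left (d * z ^ ((d : ℤ) - 1)))
  convert (hasSum_deriv_invPowSeries ha hρ hρr hz).add hshift using 1
  · funext k
    have h : z ^ ((d : ℤ) - 1) * z ^ (-(((k + d : ℕ) : ℤ) + 1)) = z ^ (-((k : ℤ) + 2)) := by
      rw [← zpow_add₀ hz0]; push_cast; ring_nf
    rw [← hrec k]
    linear_combination (-(d * a (k + d))) * h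
  · have hfin : ∑ k ∈ range d, d * a k * z ^ ((d : ℤ) - 2 - k)
        = ∑ k ∈ range d, d * z ^ ((d : ℤ) - 1) * (a k * z ^ (-((k : ℤ) + 1))) :=
      sum_congr rfl fun k _ ↦ by rw [← hzpow]; ring
    rw [hfin]
    ring

end invPowSeries

theorem exists_differentiableOn_ball_eq_pow_mul_inv {g : ℂ → ℂ} {R C : ℝ} {m : ℕ} (hR : 0 < R)
    (hg : DifferentiableOn ℂ g {z | R < ‖z‖}) (hgrow : ∀ z, R < ‖z‖ → ‖g z‖ ≤ C * ‖z‖ ^ m) :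
    ∃ H : ℂ → ℂ, DifferentiableOn ℂ H (ball 0 R⁻¹) ∧ ∀ w ≠ 0, H w = w ^ m * g w⁻¹ := by
  have hinv : ∀ w ∈ ball (0 : ℂ) R⁻¹ \ {0}, R < ‖w⁻¹‖ := fun w ⟨hw, hw0⟩ ↦ by
    rw [mem_ball_zero_iff] at hw
    rw [norm_inv, lt_inv_comm₀ hR (norm_pos_iff.2 hw0)]
    exact hw
  have hU : IsOpen {z : ℂ | R < ‖z‖} := isOpen_lt continuous_const continuous_norm
  have hdiff : DifferentiableOn ℂ (fun w ↦ w ^ m * g w⁻¹) (ball 0 R⁻¹ \ {0}) := fun w hw ↦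
    ((differentiableAt_pow m).mul ((hg.differentiableAt (hU.mem_nhds (hinv w hw))).comp w
      (differentiableAt_inv hw.2))).differentiableWithinAt
  have hbdd : BddAbove (norm ∘ (fun w ↦ w ^ m * g w⁻¹) '' (ball 0 R⁻¹ \ {0})) := by
    refine ⟨C, ?_⟩
    rintro _ ⟨w, hw, rfl⟩
    calc ‖w ^ m * g w⁻¹‖ ≤ ‖w‖ ^ m * (C * ‖w⁻¹‖ ^ m) := by
          rw [norm_mul, norm_pow]; gcongr; exact hgrow _ (hinv w hw)
      _ = C := by
          rw [norm_inv, inv_pow, mul_left_comm,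
            mul_inv_cancel₀ (pow_ne_zero _ (norm_ne_zero_iff.2 hw.2)), mul_one]
  exact ⟨_, Complex.differentiableOn_update_limUnder_of_bddAbove (ball_mem_nhds 0 (by positivity))
    hdiff hbdd, fun w hw ↦ Function.update_of_ne hw _ _⟩

theorem DifferentiableOn.exists_hasSum_pow_of_lt {H : ℂ → ℂ} {r r' : ℝ}
    (hH : DifferentiableOn ℂ H (ball 0 r)) (hr' : 0 < r') (hr'r : r' < r) :
    ∃ p : ℕ → ℂ, ∃ A : ℝ, (∀ n, ‖p n‖ ≤ A * r'⁻¹ ^ n) ∧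
      ∀ w, ‖w‖ < r' → HasSum (fun n ↦ p n * w ^ n) (H w) := by
  obtain ⟨s, hr's, hsr⟩ := exists_between hr'r
  lift s to NNReal using (hr'.trans hr's).le
  have hps := (hH.mono (closedBall_subset_ball hsr)).hasFPowerSeriesOnBall
    (NNReal.coe_pos.1 (hr'.trans hr's))
  set P := cauchyPowerSeries H 0 s
  obtain ⟨A, -, hA⟩ := P.norm_mul_pow_le_of_lt_radius (r := ⟨r', hr'.le⟩)
    (lt_of_lt_of_le (ENNReal.coe_lt_coe.2 (NNReal.coe_lt_coe.1 hr's)) hps.r_le)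
  refine ⟨P.coeff, A, fun n ↦ ?_, fun w hw ↦ ?_⟩
  · rw [← P.norm_apply_eq_norm_coef, inv_pow, ← div_eq_mul_inv, le_div_iff₀ (by positivity)]
    exact hA n
  · have hw' : w ∈ eball (0 : ℂ) s := by
      rw [eball_coe, mem_ball_zero_iff]
      exact hw.trans hr's
    simpa [P.apply_eq_pow_smul_coeff, mul_comm] using hps.hasSum hw'

theorem exists_hasSum_zpow_of_norm_le_mul_pow {g : ℂ → ℂ} {R ρ C : ℝ} {m : ℕ} (hR : 0 < R)
    (hRρ : R < ρ) (hg : DifferentiableOn ℂ g {z | R < ‖z‖})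
    (hgrow : ∀ z, R < ‖z‖ → ‖g z‖ ≤ C * ‖z‖ ^ m) :
    ∃ p : ℕ → ℂ, ∃ A : ℝ, (∀ n, ‖p n‖ ≤ A * ρ ^ n) ∧
      ∀ z, ρ < ‖z‖ → HasSum (fun n ↦ p n * z ^ ((m : ℤ) - n)) (g z) := by
  have hρ : 0 < ρ := hR.trans hRρ
  obtain ⟨H, hH, hHg⟩ := exists_differentiableOn_ball_eq_pow_mul_inv hR hg hgrow
  obtain ⟨p, A, hpA, hp⟩ := hH.exists_hasSum_pow_of_lt (inv_pos.2 hρ) (inv_strictAnti₀ hR hRρ)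
  refine ⟨p, A, by simpa using hpA, fun z hz ↦ ?_⟩
  have hz0 : z ≠ 0 := norm_pos_iff.1 (hρ.trans hz)
  have hsum := (hp z⁻¹ (by rwa [norm_inv, inv_lt_inv₀ (hρ.trans hz) hρ])).mul_left (z ^ m)
  rw [hHg _ (inv_ne_zero hz0), ← mul_assoc, inv_pow, mul_inv_cancel₀ (pow_ne_zero _ hz0),
    one_mul, inv_inv] at hsum
  refine hsum.congr_fun fun n ↦ ?_
  rw [zpow_sub₀ hz0, zpow_natCast, zpow_natCast, inv_pow]
  ring

noncomputable def laurentSum (s : Finset ℤ) : (ℤ → ℂ) →ₗ[ℂ] ℂ → ℂ where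
  toFun c z := ∑ j ∈ s, c j * z ^ j
  map_add' c c' := by ext z; simp [add_mul, sum_add_distrib]
  map_smul' a c := by ext z; simp [mul_sum, mul_assoc]

theorem const_mul_zpow_mem_range_laurentSum {s : Finset ℤ} {j : ℤ} (hj : j ∈ s) (c : ℂ) :
    (fun z : ℂ ↦ c * z ^ j) ∈ LinearMap.range (laurentSum s) :=
  ⟨Pi.single j c, by ext z; simp [laurentSum, Pi.single_apply, hj]⟩

theorem sum_mul_zpow_mem_range_laurentSum {s : Finset ℤ} {ι : Type*} (t : Finset ι) (c : ι → ℂ)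
    {e : ι → ℤ} (he : ∀ i ∈ t, e i ∈ s) :
    (fun z : ℂ ↦ ∑ i ∈ t, c i * z ^ e i) ∈ LinearMap.range (laurentSum s) := by
  have : (fun z : ℂ ↦ ∑ i ∈ t, c i * z ^ e i) = ∑ i ∈ t, fun z : ℂ ↦ c i * z ^ e i := by
    ext z; simp [Finset.sum_apply]
  rw [this]
  exact sum_mem fun i hi ↦ const_mul_zpow_mem_range_laurentSum (he i hi) (c i)

theorem eval_mem_range_laurentSum {s : Finset ℤ} {q : ℂ[X]} {n : ℕ} (hq : q.degree < n)
    (hs : ∀ i < n, (i : ℤ) ∈ s) : (fun z ↦ q.eval z) ∈ LinearMap.range (laurentSum s) := by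
  have : (fun z ↦ q.eval z) = fun z : ℂ ↦ ∑ i ∈ q.support, q.coeff i * z ^ (i : ℤ) := by
    ext z; simp [eval_eq_sum, sum_def]
  rw [this]
  refine sum_mul_zpow_mem_range_laurentSum _ _ fun i hi ↦ hs i ?_
  by_contra! h
  exact mem_support_iff.1 hi (coeff_eq_zero_of_degree_lt (hq.trans_le (by exact_mod_cast h)))

theorem Polynomial.norm_eval_le_mul_pow_natDegree {𝕜 : Type*} [NormedField 𝕜] (P : 𝕜[X]) {z : 𝕜}
    (hz : 1 ≤ ‖z‖) :
    ‖P.eval z‖ ≤ (∑ i ∈ range (P.natDegree + 1), ‖P.coeff i‖) * ‖z‖ ^ P.natDegree := by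
  rw [eval_eq_sum_range, sum_mul]
  refine (norm_sum_le _ _).trans (sum_le_sum fun i hi ↦ ?_)
  rw [norm_mul, norm_pow]
  gcongr
  exact Nat.lt_succ_iff.1 (mem_range.1 hi)

theorem exists_norm_eval_add_le_mul_pow (P : ℂ[X]) {S : ℂ → ℂ} {R B : ℝ} (hR : 1 ≤ R)
    (hS : ∀ z, R < ‖z‖ → ‖S z‖ ≤ B) :
    ∃ C > (0 : ℝ), ∃ m : ℕ, ∀ z : ℂ, R < ‖z‖ → ‖P.eval z + S z‖ ≤ C * ‖z‖ ^ m := by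
  set K := ∑ i ∈ range (P.natDegree + 1), ‖P.coeff i‖
  have hK : 0 ≤ K := sum_nonneg fun _ _ ↦ norm_nonneg _
  refine ⟨K + |B| + 1, by positivity, P.natDegree, fun z hz ↦ ?_⟩
  have hz1 : 1 ≤ ‖z‖ ^ P.natDegree := one_le_pow₀ (hR.trans hz.le)
  calc ‖P.eval z + S z‖ ≤ K * ‖z‖ ^ P.natDegree + |B| :=
        (norm_add_le _ _).trans (add_le_add (P.norm_eval_le_mul_pow_natDegree (hR.trans hz.le))
          ((hS z hz).trans (le_abs_self B)))
    _ ≤ (K + |B| + 1) * ‖z‖ ^ P.natDegree := by nlinarith [abs_nonneg B]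

theorem hasSum_tail_of_hasSum_zpow {p : ℕ → ℂ} {m : ℕ} {z s : ℂ}
    (h : HasSum (fun n ↦ p n * z ^ ((m : ℤ) - n)) s) :
    HasSum (fun k ↦ p (k + (m + 2)) * z ^ (-((k : ℤ) + 2)))
      (s - (∑ n ∈ range (m + 1), monomial (m - n) (p n)).eval z - p (m + 1) * z ^ (-1 : ℤ)) := by
  have hpoly : (∑ n ∈ range (m + 1), monomial (m - n) (p n)).eval z
      = ∑ n ∈ range (m + 1), p n * z ^ ((m : ℤ) - n) := by
    rw [eval_finsetSum]
    refine sum_congr rfl fun n hn ↦ ?_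
    rw [eval_monomial, ← zpow_natCast, Nat.cast_sub (Nat.lt_succ_iff.1 (mem_range.1 hn))]
  have hlast : p (m + 1) * z ^ (-1 : ℤ) = p (m + 1) * z ^ ((m : ℤ) - (m + 1 : ℕ)) := by
    push_cast; ring_nf
  rw [hpoly, hlast, sub_sub, ← sum_range_succ]
  refine ((hasSum_nat_add_iff' (m + 2)).2 h).congr_fun fun k ↦ ?_
  push_cast
  ring_nf

/-- For `d ≥ 1` and `g` holomorphic near `∞` with polynomial growth (i.e. meromorphic at
`∞`), there are `R' ≥ R`, `f` holomorphic near `∞` with polynomial growth, and constants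
`c_{-1}, …, c_{d-2}` with `g(z) = f'(z) + d z^(d-1) f(z) + ∑_{j=-1}^{d-2} c_j z^j` for
`|z| > R'`; i.e. every differential `g(z)e^{z^d} dz` with `g` meromorphic at `∞` is
congruent, modulo exact differentials `d(f(z)e^{z^d})`, to a combination of
`z^j e^{z^d} dz`, `-1 ≤ j ≤ d-2`. -/
theorem merom_exp_decomposition (d : ℕ) (hd : 1 ≤ d) (R : ℝ) (hR : 0 < R) (g : ℂ → ℂ)
    (hg : DifferentiableOn ℂ g {z : ℂ | R < ‖z‖})
    (hgrow : ∃ C > (0:ℝ), ∃ m : ℕ, ∀ z : ℂ, R < ‖z‖ →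
      ‖g z‖ ≤ C * (‖z‖) ^ m) :
    ∃ R' ≥ R, ∃ f : ℂ → ℂ, ∃ c : ℤ → ℂ,
      DifferentiableOn ℂ f {z : ℂ | R' < ‖z‖} ∧
      (∃ C > (0:ℝ), ∃ m : ℕ, ∀ z : ℂ, R' < ‖z‖ →
        ‖f z‖ ≤ C * (‖z‖) ^ m) ∧
      ∀ z : ℂ, R' < ‖z‖ →
        g z = deriv f z + (d : ℂ) * z ^ (d - 1) * f z
                + ∑ j ∈ Finset.Icc (-1 : ℤ) ((d : ℤ) - 2), c j * z ^ j := by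
  obtain ⟨K, -, m, hgrow⟩ := hgrow
  have hρ : (0 : ℝ) ≤ R + 1 := by linarith
  have hρr : R + 1 < R + 2 := by linarith
  obtain ⟨p, A, hpA, hp⟩ := exists_hasSum_zpow_of_norm_le_mul_pow hR (lt_add_one R) hg hgrow
  set Q : ℂ[X] := ∑ n ∈ range (m + 1), monomial (m - n) (p n)
  obtain ⟨P, hP⟩ := Q.exists_degree_sub_derivative_add_lt hd
  obtain ⟨a, ha, hrec⟩ := exists_bounded_solution_of_recurrence d (b := fun k ↦ p (k + (m + 2)))
    (A := A * (R + 1) ^ (m + 2)) (ρ := R + 1) fun k ↦ (hpA _).trans_eq (by ring)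
  have hres : (fun z ↦ (Q - (derivative P + C (d : ℂ) * X ^ (d - 1) * P)).eval z
      + p (m + 1) * z ^ (-1 : ℤ) - ∑ k ∈ range d, d * a k * z ^ ((d : ℤ) - 2 - k))
      ∈ LinearMap.range (laurentSum (Icc (-1) ((d : ℤ) - 2))) := by
    refine sub_mem (add_mem (eval_mem_range_laurentSum hP fun i hi ↦ ?_)
      (const_mul_zpow_mem_range_laurentSum ?_ _)) (sum_mul_zpow_mem_range_laurentSum _ _ ?_)
    all_goals simp only [mem_Icc, mem_range]; omega
  obtain ⟨c, hc⟩ := hres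
  have hS := differentiableOn_invPowSeries ha hρ hρr
  refine ⟨R + 2, by linarith, fun z ↦ P.eval z + invPowSeries a z, c,
    P.differentiable.differentiableOn.add hS, exists_norm_eval_add_le_mul_pow P (by linarith)
      fun z hz ↦ norm_invPowSeries_le ha hρ hρr hz.le, fun z hz ↦ ?_⟩
  have hsplit := (hasSum_tail_of_hasSum_zpow (hp z (by linarith))).unique
    (hasSum_deriv_add_mul_invPowSeries d ha hρ hρr hrec hz)
  rw [deriv_fun_add P.differentiableAt (hS.differentiableAt
    ((isOpen_lt continuous_const continuous_norm).mem_nhds hz)), Polynomial.deriv,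
    show ∑ j ∈ Icc (-1 : ℤ) ((d : ℤ) - 2), c j * z ^ j = _ from congrFun hc z]
  simp only [eval_sub, eval_add, eval_mul, eval_C, eval_pow, eval_X]
  rw [← zpow_natCast, Nat.cast_sub hd, Nat.cast_one]
  linear_combination hsplit
end

section
/- Let d ≥ 1 be an integer, let R > 0, let f : ℂ → ℂ be holomorphic on {z : |z| > R} with polynomial growth at infinity (there exist C > 0 and m ∈ ℕ with |f(z)| ≤ C|z|^m for all |z| > R), and let c_{−1}, c_{0}, …, c_{d−2} be complex constants such that f'(z) + d·z^{d−1}·f(z) = Σ_{j=−1}^{d−2} c_j z^{j} for all |z| > R. Then c_{−1} = c_{0} = … = c_{d−2} = 0 and f is identically zero on {z : |z| > R}. (This is the directness of the sum in the decomposition 𝓜_p·e^{z^d} dz = d(𝓜_p·e^{z^d}) ⊕ ⊕_{j=−1}^{d−2} ℂ·z^{j}e^{z^d} dz, and together with the existence of the decomposition it shows that the quotient Ω_p([h])/d𝓞_p([h]) of differentials with exponential singularity of type h = z^d at ∞ modulo exact such differentials has dimension d, with basis the classes of z^{j}e^{z^d} dz, −1 ≤ j ≤ d−2.) -/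
/-!
Let `a n = (2πi)⁻¹ ∮_{|z|=r} z^(-n-1) f(z) dz` be the Laurent coefficients of `f` at `∞`; they do
not depend on `r > R`. Pairing the equation with `z^(-n) dz` gives the recurrence
`n a_n + d a_(n-d) = c_(n-1)`, where the right side can be nonzero only for `0 ≤ n ≤ d - 1`.
Polynomial growth kills `a_n` for `n > m`, and the recurrence carries this down to every `n ≥ 0`.
For `n < 0` it gives `|a_n| j! ≤ d^j |a_(n-jd)|`, which together with the Cauchy bound
`|a_k| ≤ M r^(-k)` forces `a_n = 0`. So every `c_j` vanishes, `(f e^(z^d))' = 0` on the connected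
set `|z| > R`, and `f e^(z^d)` is a constant `K`. Along a ray on which `z^d` is negative real,
`|K| = |f(z)| e^(-|z|^d)` tends to `0` by polynomial growth, so `K = 0`.
-/

open Complex Metric Filter Topology
open scoped Real

noncomputable def laurentCoeff (f : ℂ → ℂ) (r : ℝ) (n : ℤ) : ℂ :=
  (2 * π * I : ℂ)⁻¹ • ∮ z in C(0, r), z ^ (-n - 1) * f z

section LaurentCoeff

variable {f g : ℂ → ℂ} {r : ℝ}

lemma continuousOn_zpow_sphere (hr : 0 < r) (p : ℤ) :
    ContinuousOn (fun z : ℂ => z ^ p) (sphere 0 r) :=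
  (continuousOn_zpow₀ p).mono fun z hz => show z ≠ 0 from ne_zero_of_mem_sphere hr.ne' ⟨z, hz⟩

lemma circleIntegrable_zpow_mul (hr : 0 < r) (hf : ContinuousOn f (sphere 0 r)) (p : ℤ) :
    CircleIntegrable (fun z => z ^ p * f z) 0 r :=
  ContinuousOn.circleIntegrable hr.le <| (continuousOn_zpow_sphere hr p).mul hf

lemma laurentCoeff_congr (hr : 0 ≤ r) (h : Set.EqOn f g (sphere 0 r)) (n : ℤ) :
    laurentCoeff f r n = laurentCoeff g r n := by
  rw [laurentCoeff, laurentCoeff, circleIntegral.integral_congr hr fun z hz => by rw [h hz]]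

lemma laurentCoeff_add (hr : 0 < r) (hf : ContinuousOn f (sphere 0 r))
    (hg : ContinuousOn g (sphere 0 r)) (n : ℤ) :
    laurentCoeff (fun z => f z + g z) r n = laurentCoeff f r n + laurentCoeff g r n := by
  simp only [laurentCoeff, mul_add, ← smul_add]
  rw [circleIntegral.integral_add (circleIntegrable_zpow_mul hr hf _)
    (circleIntegrable_zpow_mul hr hg _)]

lemma laurentCoeff_const_mul (a : ℂ) (n : ℤ) :
    laurentCoeff (fun z => a * f z) r n = a * laurentCoeff f r n := by
  simp only [laurentCoeff, mul_left_comm _ a, circleIntegral.integral_const_mul, smul_eq_mul]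

lemma laurentCoeff_sum {ι : Type*} (s : Finset ι) {F : ι → ℂ → ℂ} (hr : 0 < r)
    (hF : ∀ i ∈ s, ContinuousOn (F i) (sphere 0 r)) (n : ℤ) :
    laurentCoeff (fun z => ∑ i ∈ s, F i z) r n = ∑ i ∈ s, laurentCoeff (F i) r n := by
  simp only [laurentCoeff, Finset.mul_sum, ← Finset.smul_sum]
  rw [circleIntegral.integral_fun_sum fun i hi => circleIntegrable_zpow_mul hr (hF i hi) _]

lemma laurentCoeff_zpow (hr : 0 < r) (j n : ℤ) :
    laurentCoeff (fun z => z ^ j) r n = if j = n then 1 else 0 := by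
  have hpow : ∀ z ∈ sphere (0 : ℂ) r, z ^ (-n - 1) * z ^ j = (z - 0) ^ (j - n - 1) := by
    intro z hz
    rw [sub_zero, ← zpow_add₀ (ne_zero_of_mem_sphere hr.ne' ⟨z, hz⟩)]
    ring_nf
  rw [laurentCoeff, circleIntegral.integral_congr hr.le hpow]
  split_ifs with h
  · subst h
    rw [sub_self, zero_sub, circleIntegral.integral_congr hr.le fun z _ => zpow_neg_one (z - 0),
      circleIntegral.integral_sub_center_inv 0 hr.ne', smul_eq_mul,
      inv_mul_cancel₀ two_pi_I_ne_zero]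
  · rw [circleIntegral.integral_sub_zpow_of_ne (by omega), smul_zero]

lemma laurentCoeff_pow_mul (hr : 0 < r) (k : ℕ) (n : ℤ) :
    laurentCoeff (fun z => z ^ k * f z) r n = laurentCoeff f r (n - k) := by
  have hpow : ∀ z ∈ sphere (0 : ℂ) r,
      z ^ (-n - 1) * (z ^ k * f z) = z ^ (-(n - k) - 1) * f z := by
    intro z hz
    rw [← mul_assoc, ← zpow_natCast, ← zpow_add₀ (ne_zero_of_mem_sphere hr.ne' ⟨z, hz⟩)]
    congr 2
    ring
  rw [laurentCoeff, laurentCoeff, circleIntegral.integral_congr hr.le hpow]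

lemma laurentCoeff_deriv (hr : 0 < r) (hf : ∀ z ∈ sphere (0 : ℂ) r, DifferentiableAt ℂ f z)
    (hf' : ContinuousOn (deriv f) (sphere 0 r)) (n : ℤ) :
    laurentCoeff (deriv f) r n = (n + 1) * laurentCoeff f r (n + 1) := by
  have hcont : ContinuousOn f (sphere 0 r) := fun z hz =>
    (hf z hz).continuousAt.continuousWithinAt
  have hderiv : ∀ z ∈ sphere (0 : ℂ) |r|, HasDerivWithinAt (fun z => z ^ (-n - 1) * f z)
      (z ^ (-n - 1) * deriv f z - (n + 1) * (z ^ (-(n + 1) - 1) * f z)) (sphere 0 |r|) z := by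
    intro z hz
    rw [abs_of_pos hr] at hz
    refine ((hasDerivAt_zpow (-n - 1) z (Or.inl (ne_zero_of_mem_sphere hr.ne' ⟨z, hz⟩))).mul
      (hf z hz).hasDerivAt).hasDerivWithinAt.congr_deriv ?_
    push_cast
    ring_nf
  have hexact := circleIntegral.integral_eq_zero_of_hasDerivWithinAt' hderiv
  rw [circleIntegral.integral_sub (circleIntegrable_zpow_mul hr hf' _)
    (show CircleIntegrable (fun z => (n + 1 : ℂ) * (z ^ (-(n + 1) - 1) * f z)) 0 r from
      (circleIntegrable_zpow_mul hr hcont _).const_smul), circleIntegral.integral_const_mul,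
    sub_eq_zero] at hexact
  rw [laurentCoeff, laurentCoeff, hexact, smul_eq_mul, smul_eq_mul, mul_left_comm]

lemma laurentCoeff_eq_of_le {R r' : ℝ} (hR : 0 ≤ R) (hf : DifferentiableOn ℂ f {z | R < ‖z‖})
    (hr : R < r) (hr' : r ≤ r') (n : ℤ) : laurentCoeff f r' n = laurentCoeff f r n := by
  have hdiff : ∀ z : ℂ, R < ‖z‖ → DifferentiableAt ℂ (fun z => z ^ (-n - 1) * f z) z :=
    fun z hz => ((differentiableAt_zpow.2 (Or.inl (norm_pos_iff.1 (hR.trans_lt hz)))).mul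
      (hf.differentiableAt ((isOpen_lt continuous_const continuous_norm).mem_nhds hz)))
  have hout : ∀ z ∈ closedBall (0 : ℂ) r' \ ball 0 r, R < ‖z‖ := fun z hz =>
    hr.trans_le (by simpa using hz.2)
  rw [laurentCoeff, laurentCoeff,
    circleIntegral_eq_of_differentiable_on_annulus_off_countable (hR.trans_lt hr) hr'
      Set.countable_empty (fun z hz => (hdiff z (hout z hz)).continuousAt.continuousWithinAt)
      fun z hz => hdiff z (hout z ⟨ball_subset_closedBall hz.1.1,
        fun h => hz.1.2 (ball_subset_closedBall h)⟩)]

lemma norm_laurentCoeff_le {M : ℝ} (hr : 0 < r) (hM : ∀ z ∈ sphere (0 : ℂ) r, ‖f z‖ ≤ M)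
    (n : ℤ) : ‖laurentCoeff f r n‖ ≤ M * r ^ (-n) := by
  have hbound : ∀ z ∈ sphere (0 : ℂ) r, ‖z ^ (-n - 1) * f z‖ ≤ r ^ (-n - 1) * M := by
    intro z hz
    rw [norm_mul, norm_zpow, mem_sphere_zero_iff_norm.1 hz]
    exact mul_le_mul_of_nonneg_left (hM z hz) (zpow_nonneg hr.le _)
  calc ‖laurentCoeff f r n‖ ≤ r * (r ^ (-n - 1) * M) :=
        circleIntegral.norm_two_pi_i_inv_smul_integral_le_of_norm_le_const hr.le hbound
    _ = M * r ^ (-n) := by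
        rw [zpow_sub_one₀ hr.ne']
        field_simp

lemma norm_laurentCoeff_le_of_norm_le_pow {R C : ℝ} {m : ℕ} (hR : 0 ≤ R)
    (hgrow : ∀ z : ℂ, R < ‖z‖ → ‖f z‖ ≤ C * ‖z‖ ^ m) (hr : R < r) (n : ℤ) :
    ‖laurentCoeff f r n‖ ≤ C * r ^ m * r ^ (-n) :=
  norm_laurentCoeff_le (hR.trans_lt hr) (fun z hz => by
    simpa [mem_sphere_zero_iff_norm.1 hz] using
      hgrow z (by rwa [mem_sphere_zero_iff_norm.1 hz])) n

lemma laurentCoeff_eq_zero_of_lt {R C : ℝ} {m : ℕ} (hR : 0 ≤ R)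
    (hf : DifferentiableOn ℂ f {z | R < ‖z‖})
    (hgrow : ∀ z : ℂ, R < ‖z‖ → ‖f z‖ ≤ C * ‖z‖ ^ m) (hr : R < r) {n : ℤ} (hn : m < n) :
    laurentCoeff f r n = 0 := by
  have hbound : ∀ r' ≥ r, ‖laurentCoeff f r n‖ ≤ C * r' ^ ((m : ℤ) - n) := by
    intro r' hr'
    rw [← laurentCoeff_eq_of_le hR hf hr hr' n, sub_eq_add_neg,
      zpow_add₀ (hR.trans_lt (hr.trans_le hr')).ne', zpow_natCast, ← mul_assoc]
    exact norm_laurentCoeff_le_of_norm_le_pow hR hgrow (hr.trans_le hr') n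
  have hlim : Tendsto (fun r' : ℝ => C * r' ^ ((m : ℤ) - n)) atTop (𝓝 0) := by
    simpa using (tendsto_zpow_atTop_zero (by omega)).const_mul C
  exact norm_le_zero_iff.1 (ge_of_tendsto hlim ((eventually_ge_atTop r).mono hbound))

end LaurentCoeff

lemma eq_zero_of_recurrence_of_nonneg {A : ℤ → ℂ} {d m : ℕ} (hd : 1 ≤ d)
    (hrec : ∀ n : ℤ, (d : ℤ) ≤ n → n * A n + d * A (n - d) = 0)
    (htop : ∀ n : ℤ, (m : ℤ) < n → A n = 0) {n : ℤ} (hn : 0 ≤ n) : A n = 0 := by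
  have hd0 : (d : ℂ) ≠ 0 := by exact_mod_cast (by omega : d ≠ 0)
  have hdescent : ∀ j : ℕ, ∀ n : ℤ, 0 ≤ n → (m : ℤ) < n + j * d → A n = 0 := by
    intro j
    induction j with
    | zero => intro n _ hm; exact htop n (by simpa using hm)
    | succ j ih =>
      intro n hn hm
      have h := hrec (n + d) (by omega)
      rw [ih (n + d) (by omega) (by push_cast at hm; linarith), add_sub_cancel_right, mul_zero,
        zero_add] at h
      exact (mul_eq_zero.1 h).resolve_left hd0
  refine hdescent (m + 1) n hn ?_
  push_cast
  nlinarith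

lemma eq_zero_of_recurrence_of_neg {A : ℤ → ℂ} {d : ℕ} (hd : 1 ≤ d) {M q : ℝ} (hq : 0 < q)
    (hrec : ∀ n : ℤ, n ≤ -1 → n * A n + d * A (n - d) = 0)
    (hbound : ∀ n : ℤ, ‖A n‖ ≤ M * q ^ (-n)) {n : ℤ} (hn : n ≤ -1) : A n = 0 := by
  have hstep : ∀ n : ℤ, n ≤ -1 → |(n : ℝ)| * ‖A n‖ = d * ‖A (n - d)‖ := by
    intro n hn
    have h := congrArg norm (eq_neg_of_add_eq_zero_left (hrec n hn))
    rwa [norm_neg, norm_mul, norm_mul, Complex.norm_intCast, Complex.norm_natCast] at h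
  have hfact : ∀ j : ℕ, ‖A n‖ * j.factorial ≤ d ^ j * ‖A (n - j * d)‖ := by
    intro j
    induction j with
    | zero => simp
    | succ j ih =>
      have hj : (j : ℝ) + 1 ≤ |((n - j * d : ℤ) : ℝ)| := by
        rw [← Int.cast_abs, abs_of_nonpos (by nlinarith)]
        exact_mod_cast (by nlinarith : (j : ℤ) + 1 ≤ -(n - j * d))
      calc ‖A n‖ * (j + 1).factorial = ‖A n‖ * j.factorial * (j + 1) := by
            push_cast [Nat.factorial_succ]; ring
        _ ≤ d ^ j * ‖A (n - j * d)‖ * |((n - j * d : ℤ) : ℝ)| := by gcongr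
        _ = d ^ (j + 1) * ‖A (n - (j + 1 : ℕ) * d)‖ := by
            rw [mul_assoc, mul_comm ‖_‖, hstep _ (by nlinarith)]
            push_cast
            ring_nf
  set K : ℝ := M * q ^ (-n)
  have hle : ∀ j : ℕ, ‖A n‖ ≤ K * ((d * q ^ d) ^ j / j.factorial) := by
    intro j
    rw [mul_div_assoc', le_div_iff₀ (by positivity)]
    calc ‖A n‖ * j.factorial ≤ d ^ j * (M * q ^ (-(n - j * d))) :=
          (hfact j).trans (mul_le_mul_of_nonneg_left (hbound _) (by positivity))
      _ = K * (d * q ^ d) ^ j := by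
          rw [neg_sub, sub_eq_add_neg, zpow_add₀ hq.ne', mul_comm (j : ℤ), zpow_mul]
          push_cast [zpow_natCast, mul_pow, ← pow_mul]
          ring
  have hlim : Tendsto (fun j : ℕ => K * ((d * q ^ d) ^ j / j.factorial)) atTop (𝓝 0) := by
    simpa using (FloorSemiring.tendsto_pow_div_factorial_atTop (d * q ^ d)).const_mul K
  exact norm_le_zero_iff.1 (ge_of_tendsto hlim (Eventually.of_forall hle))

lemma laurentCoeff_recurrence {f : ℂ → ℂ} {R r : ℝ} {d : ℕ} (hd : 1 ≤ d) {c : ℤ → ℂ}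
    (hR : 0 ≤ R) (hf : DifferentiableOn ℂ f {z | R < ‖z‖}) (hr : R < r)
    (heq : ∀ z : ℂ, R < ‖z‖ →
      deriv f z + (d : ℂ) * z ^ (d - 1) * f z
        = ∑ j ∈ Finset.Icc (-1 : ℤ) ((d : ℤ) - 2), c j * z ^ j) (n : ℤ) :
    n * laurentCoeff f r n + d * laurentCoeff f r (n - d)
      = if n - 1 ∈ Finset.Icc (-1 : ℤ) ((d : ℤ) - 2) then c (n - 1) else 0 := by
  have hr0 : 0 < r := hR.trans_lt hr
  have hU : IsOpen {z : ℂ | R < ‖z‖} := isOpen_lt continuous_const continuous_norm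
  have hsphere : sphere (0 : ℂ) r ⊆ {z | R < ‖z‖} := fun z hz => by
    simpa [mem_sphere_zero_iff_norm.1 hz] using hr
  have hpow : ContinuousOn (fun z : ℂ => z ^ (d - 1) * f z) (sphere 0 r) :=
    (continuous_pow _).continuousOn.mul (hf.continuousOn.mono hsphere)
  have hcoeff := laurentCoeff_congr hr0.le (fun z hz => heq z (hsphere hz)) (n - 1)
  simp only [mul_assoc] at hcoeff
  rw [laurentCoeff_add (g := fun z => (d : ℂ) * (z ^ (d - 1) * f z)) hr0
      ((hf.deriv hU).continuousOn.mono hsphere) (continuousOn_const.mul hpow),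
    laurentCoeff_deriv hr0 (fun z hz => hf.differentiableAt (hU.mem_nhds (hsphere hz)))
      ((hf.deriv hU).continuousOn.mono hsphere),
    laurentCoeff_const_mul, laurentCoeff_pow_mul hr0,
    laurentCoeff_sum (F := fun j z => c j * z ^ j) _ hr0 fun j _ =>
      continuousOn_const.mul (continuousOn_zpow_sphere hr0 j)] at hcoeff
  simp only [laurentCoeff_const_mul, laurentCoeff_zpow hr0, mul_ite, mul_one, mul_zero,
    Finset.sum_ite_eq'] at hcoeff
  rw [← hcoeff, Nat.cast_sub hd]
  push_cast
  ring_nf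

lemma isPreconnected_setOf_lt_norm {E : Type*} [NormedAddCommGroup E] [NormedSpace ℝ E]
    (h : 1 < Module.rank ℝ E) (R : ℝ) : IsPreconnected {z : E | R < ‖z‖} := by
  rcases lt_or_ge R 0 with hR | hR
  · simpa [hR.trans_le (norm_nonneg _)] using isPreconnected_univ (α := E)
  have himage : {z : E | R < ‖z‖} =
      (fun p : ℝ × E => p.1 • p.2) '' (Set.Ioi R ×ˢ sphere 0 1) := by
    ext z
    constructor
    · intro hz
      have hz0 : ‖z‖ ≠ 0 := (hR.trans_lt hz).ne'
      refine ⟨(‖z‖, ‖z‖⁻¹ • z), ⟨hz, ?_⟩, smul_inv_smul₀ hz0 z⟩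
      simp [norm_smul, hz0]
    · rintro ⟨⟨t, u⟩, ⟨ht, hu⟩, rfl⟩
      simp only [Set.mem_Ioi, mem_sphere_zero_iff_norm] at ht hu
      simpa [norm_smul, hu, abs_of_pos (hR.trans_lt ht)] using ht
  rw [himage]
  exact (isPreconnected_Ioi.prod (isPreconnected_sphere h 0 1)).image _
    (continuous_fst.smul continuous_snd).continuousOn

lemma exists_mul_exp_pow_eq_const {U : Set ℂ} (hU : IsOpen U) (hU' : IsPreconnected U)
    {f : ℂ → ℂ} (hf : DifferentiableOn ℂ f U) {d : ℕ}
    (hode : ∀ z ∈ U, deriv f z + d * z ^ (d - 1) * f z = 0) :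
    ∃ K, ∀ z ∈ U, f z * exp (z ^ d) = K := by
  have hderiv : ∀ z ∈ U, HasDerivAt (fun z => f z * exp (z ^ d)) 0 z := by
    intro z hz
    refine (((hf z hz).differentiableAt (hU.mem_nhds hz)).hasDerivAt.mul
      (hasDerivAt_pow d z).cexp).congr_deriv ?_
    linear_combination exp (z ^ d) * hode z hz
  exact hU.exists_is_const_of_deriv_eq_zero hU'
    (fun z hz => (hderiv z hz).differentiableAt.differentiableWithinAt)
    (fun z hz => (hderiv z hz).deriv)

lemma exists_pow_eq_neg_one {d : ℕ} (hd : d ≠ 0) : ∃ ζ : ℂ, ‖ζ‖ = 1 ∧ ζ ^ d = -1 := by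
  refine ⟨exp (π / d * I), by simpa using norm_exp_ofReal_mul_I (π / d), ?_⟩
  rw [← Complex.exp_nat_mul, ← exp_pi_mul_I]
  congr 1
  field_simp

lemma eq_zero_of_mul_exp_pow_eq_const {f : ℂ → ℂ} {R C : ℝ} {m d : ℕ} (hd : d ≠ 0)
    (hgrow : ∀ z : ℂ, R < ‖z‖ → ‖f z‖ ≤ C * ‖z‖ ^ m) {K : ℂ}
    (hK : ∀ z : ℂ, R < ‖z‖ → f z * exp (z ^ d) = K) : K = 0 := by
  obtain ⟨ζ, hζ, hζd⟩ := exists_pow_eq_neg_one hd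
  have hbound : ∀ s : ℝ, max R 1 < s → ‖K‖ ≤ C * (s ^ m * Real.exp (-s)) := by
    intro s hs
    have hs1 : 1 < s := (le_max_right R 1).trans_lt hs
    have hnorm : ‖(s : ℂ) * ζ‖ = s := by simp [hζ, abs_of_pos (one_pos.trans hs1)]
    have hR : R < ‖(s : ℂ) * ζ‖ := by rw [hnorm]; exact (le_max_left R 1).trans_lt hs
    have hexp : ‖exp (((s : ℂ) * ζ) ^ d)‖ = Real.exp (-s ^ d) := by
      rw [norm_exp, mul_pow, hζd, mul_neg_one, ← ofReal_pow, ← ofReal_neg, ofReal_re]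
    have hf := hgrow _ hR
    rw [hnorm] at hf
    calc ‖K‖ = ‖f (s * ζ)‖ * Real.exp (-s ^ d) := by rw [← hK _ hR, norm_mul, hexp]
      _ ≤ C * s ^ m * Real.exp (-s) := by
        gcongr
        · exact (norm_nonneg _).trans hf
        · exact le_self_pow₀ hs1.le hd
      _ = C * (s ^ m * Real.exp (-s)) := mul_assoc _ _ _
  have hlim : Tendsto (fun s : ℝ => C * (s ^ m * Real.exp (-s))) atTop (𝓝 0) := by
    simpa using (Real.tendsto_pow_mul_exp_neg_atTop_nhds_zero m).const_mul C
  exact norm_le_zero_iff.1 (ge_of_tendsto hlim ((eventually_gt_atTop _).mono hbound))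

/-- Directness of the sum `𝓜_p·e^{z^d} dz = d(𝓜_p·e^{z^d}) ⊕ ⊕_{j=-1}^{d-2} ℂ·z^j e^{z^d} dz`:
if `f` is holomorphic near `∞` with polynomial growth and
`f'(z) + d z^(d-1) f(z) = ∑_{j=-1}^{d-2} c_j z^j` for `|z| > R`, then all `c_j = 0` and
`f ≡ 0` on `{|z| > R}`. -/
theorem merom_exp_direct_sum (d : ℕ) (hd : 1 ≤ d) (R : ℝ) (hR : 0 < R)
    (f : ℂ → ℂ) (c : ℤ → ℂ)
    (hf : DifferentiableOn ℂ f {z : ℂ | R < ‖z‖})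
    (hgrow : ∃ C > (0:ℝ), ∃ m : ℕ, ∀ z : ℂ, R < ‖z‖ →
      ‖f z‖ ≤ C * (‖z‖) ^ m)
    (heq : ∀ z : ℂ, R < ‖z‖ →
      deriv f z + (d : ℂ) * z ^ (d - 1) * f z
        = ∑ j ∈ Finset.Icc (-1 : ℤ) ((d : ℤ) - 2), c j * z ^ j) :
    (∀ j ∈ Finset.Icc (-1 : ℤ) ((d : ℤ) - 2), c j = 0) ∧
      ∀ z : ℂ, R < ‖z‖ → f z = 0 := by
  obtain ⟨C, -, m, hgrow⟩ := hgrow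
  have hr : R < R + 1 := lt_add_one R
  have hrec := laurentCoeff_recurrence hd hR.le hf hr heq
  have hcoeff : ∀ n, laurentCoeff f (R + 1) n = 0 := by
    intro n
    rcases lt_or_ge n 0 with hn | hn
    · refine eq_zero_of_recurrence_of_neg hd (by linarith) (fun n hn => ?_)
        (norm_laurentCoeff_le_of_norm_le_pow hR.le hgrow hr) (by omega)
      rw [hrec, if_neg (by simp; omega)]
    · refine eq_zero_of_recurrence_of_nonneg hd (fun n hn => ?_)
        (fun n hn => laurentCoeff_eq_zero_of_lt hR.le hf hgrow hr hn) hn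
      rw [hrec, if_neg (by simp; omega)]
  have hc : ∀ j ∈ Finset.Icc (-1 : ℤ) ((d : ℤ) - 2), c j = 0 := fun j hj => by
    simpa [hcoeff, hj] using (hrec (j + 1)).symm
  refine ⟨hc, fun z hz => ?_⟩
  obtain ⟨K, hK⟩ := exists_mul_exp_pow_eq_const (isOpen_lt continuous_const continuous_norm)
    (isPreconnected_setOf_lt_norm (by simp [Complex.rank_real_complex]) R) hf
    fun z hz => by rw [heq z hz]; exact Finset.sum_eq_zero fun j hj => by rw [hc j hj, zero_mul]
  simpa [eq_zero_of_mul_exp_pow_eq_const (by omega) hgrow hK] using hK z hz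
end

section
/- Let d ≥ 1 be an integer and r > 0. For integers j with −1 ≤ j ≤ d−2 and k with 1 ≤ k ≤ d−1, define: Π_{0,j} = ∮_{|z|=r} z^{j} e^{−z^d} dz (counterclockwise circle), and Π_{k,j} = −∫_r^∞ t^{j} e^{−t^d} dt + ∫_0^{2πk/d} (re^{iθ})^{j} e^{−(re^{iθ})^d} · i re^{iθ} dθ + ∫_r^∞ (t e^{2πik/d})^{j} e^{−t^d} e^{2πik/d} dt (the improper integrals converge absolutely). Then the d×d complex matrix Π = (Π_{k,j})_{0 ≤ k ≤ d−1, −1 ≤ j ≤ d−2} is invertible (has nonzero determinant). -/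
open MeasureTheory Real

/-!
The circle row is computed by Cauchy's formula: only `z⁻¹ e^{-z^d}` has a residue, so the first
row is `(2πi, 0, …, 0)`. For `k ≥ 1` and `j = m ≥ 0`, let `F` be a primitive of the entire
function `f(z) = z^m e^{-z^d}`. Integrating `f` along the arc and along the two radial segments of
the sector `0 ≤ arg z ≤ φ = 2πk/d`, `|z| ≤ r`, gives `F(re^{iφ}) - F(r)` both ways, so the path
`γ_k` can be pulled into the origin: `Π_{k,j} = ∫_0^∞ f(te^{iφ}) e^{iφ} dt - ∫_0^∞ f(t) dt`.
Since `e^{iφ}` is a `d`-th root of unity, `f(te^{iφ}) e^{iφ} = ζ^{k(m+1)} f(t)` with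
`ζ = e^{2πi/d}`, whence `Π_{k,j} = (ζ^{k(j+1)} - 1) Γ((j+1)/d)/d`. Expanding along the first row
and pulling out the Gamma factors leaves `det (ζ^{kl} - 1)_{1 ≤ k,l ≤ d-1}`, which is the
Vandermonde determinant of the distinct powers `ζ^k` after subtracting its first row (all ones)
from the others.
-/

open Complex Set

section Integrals

variable {f : ℂ → ℂ}

theorem circleIntegral_zpow_neg_one_mul (hf : Differentiable ℂ f) {r : ℝ} (hr : 0 < r) :
    ∮ z in C(0, r), z ^ (-1 : ℤ) * f z = 2 * π * I * f 0 := by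
  have h := hf.differentiableOn.circleIntegral_sub_inv_smul (c := 0) (R := r)
    (Metric.mem_ball_self hr)
  simpa only [sub_zero, smul_eq_mul, zpow_neg_one] using h

theorem circleIntegral_zpow_mul_eq_zero (hf : Differentiable ℂ f) {r : ℝ} (hr : 0 ≤ r) {p : ℤ}
    (hp : 0 ≤ p) : ∮ z in C(0, r), z ^ p * f z = 0 := by
  lift p to ℕ using hp
  simp only [zpow_natCast]
  exact circleIntegral_eq_zero_of_differentiable_on_off_countable hr countable_empty
    ((continuous_pow p).mul hf.continuous).continuousOn fun z _ => by fun_prop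

theorem intervalIntegral_comp_mul_deriv_of_hasDerivAt {F : ℂ → ℂ}
    (hF : ∀ z, HasDerivAt F (f z) z) (hf : Continuous f) {γ γ' : ℝ → ℂ}
    (hγ : ∀ t, HasDerivAt γ (γ' t) t) (hγ' : Continuous γ') (a b : ℝ) :
    ∫ t in a..b, f (γ t) * γ' t = F (γ b) - F (γ a) := by
  have hγc : Continuous γ := continuous_iff_continuousAt.mpr fun t => (hγ t).continuousAt
  exact intervalIntegral.integral_eq_sub_of_hasDerivAt (fun t _ => (hF (γ t)).comp t (hγ t))
    ((by fun_prop : Continuous fun t => f (γ t) * γ' t).intervalIntegrable a b)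

theorem intervalIntegral_circleArc_eq_sub (hf : Differentiable ℂ f) (r φ : ℝ) :
    ∫ θ in (0 : ℝ)..φ, f (r * exp (θ * I)) * (I * r * exp (θ * I)) =
      (∫ t in (0 : ℝ)..r, f (t * exp (φ * I)) * exp (φ * I)) - ∫ t in (0 : ℝ)..r, f t := by
  obtain ⟨F, hF⟩ := hf.isExactOn_univ
  replace hF : ∀ z, HasDerivAt F (f z) z := fun z => hF z (mem_univ z)
  have harc (θ : ℝ) : HasDerivAt (fun θ : ℝ => (r : ℂ) * exp (θ * I)) (I * r * exp (θ * I)) θ :=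
    (((hasDerivAt_id (θ : ℂ)).mul_const I).cexp.comp_ofReal.const_mul (r : ℂ)).congr_deriv
      (by simp only [id, one_mul]; ring)
  have hray (t : ℝ) : HasDerivAt (fun t : ℝ => (t : ℂ) * exp (φ * I)) (exp (φ * I)) t := by
    simpa using ((hasDerivAt_id (t : ℂ)).mul_const (exp (φ * I))).comp_ofReal
  have hreal := intervalIntegral_comp_mul_deriv_of_hasDerivAt hF hf.continuous
    (fun t => (hasDerivAt_id (t : ℂ)).comp_ofReal) continuous_const 0 r
  simp only [mul_one, id] at hreal
  rw [intervalIntegral_comp_mul_deriv_of_hasDerivAt hF hf.continuous harc (by fun_prop),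
    intervalIntegral_comp_mul_deriv_of_hasDerivAt hF hf.continuous hray continuous_const, hreal]
  simp

theorem integral_ray_arc_ray_eq_sub (hf : Differentiable ℂ f) {r : ℝ} (hr : 0 ≤ r) (φ : ℝ)
    (hf₀ : IntegrableOn (fun t : ℝ => f t) (Ioi 0))
    (hfφ : IntegrableOn (fun t : ℝ => f (t * exp (φ * I)) * exp (φ * I)) (Ioi 0)) :
    -(∫ t in Ioi r, f t) + (∫ θ in (0 : ℝ)..φ, f (r * exp (θ * I)) * (I * r * exp (θ * I)))
        + ∫ t in Ioi r, f (t * exp (φ * I)) * exp (φ * I) =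
      (∫ t in Ioi (0 : ℝ), f (t * exp (φ * I)) * exp (φ * I)) - ∫ t in Ioi (0 : ℝ), f t := by
  rw [intervalIntegral_circleArc_eq_sub hf,
    ← intervalIntegral.integral_interval_add_Ioi hf₀ (hf₀.mono_set (Ioi_subset_Ioi hr)),
    ← intervalIntegral.integral_interval_add_Ioi hfφ (hfφ.mono_set (Ioi_subset_Ioi hr))]
  ring

end Integrals

section PowMulExpNegPow

variable {d : ℕ} (m : ℕ)

theorem pow_mul_cexp_neg_pow_ofReal (t : ℝ) :
    (t : ℂ) ^ m * exp (-((t : ℂ) ^ d)) = ((t ^ (m : ℝ) * Real.exp (-t ^ (d : ℝ)) : ℝ) : ℂ) := by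
  push_cast [Real.rpow_natCast]; rfl

theorem integrableOn_Ioi_pow_mul_cexp_neg_pow (hd : 0 < d) :
    IntegrableOn (fun t : ℝ => (t : ℂ) ^ m * exp (-((t : ℂ) ^ d))) (Ioi 0) := by
  simp_rw [pow_mul_cexp_neg_pow_ofReal]
  exact (integrableOn_rpow_mul_exp_neg_rpow (neg_one_lt_zero.trans_le m.cast_nonneg)
    (by positivity)).ofReal

theorem integral_Ioi_pow_mul_cexp_neg_pow (hd : 0 < d) :
    ∫ t in Ioi (0 : ℝ), (t : ℂ) ^ m * exp (-((t : ℂ) ^ d)) =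
      ((1 / d * Real.Gamma ((m + 1) / d) : ℝ) : ℂ) := by
  simp_rw [pow_mul_cexp_neg_pow_ofReal]
  rw [integral_complex_ofReal, _root_.integral_rpow_mul_exp_neg_rpow (by positivity)
    (neg_one_lt_zero.trans_le m.cast_nonneg)]

theorem integral_ray_arc_ray_pow_mul_cexp_neg_pow (hd : 0 < d) (k : ℕ) {r : ℝ} (hr : 0 ≤ r) :
    -(∫ t in Ioi r, (t : ℂ) ^ m * exp (-((t : ℂ) ^ d)))
        + (∫ θ in (0 : ℝ)..(2 * π * k / d), ((r : ℂ) * exp (θ * I)) ^ m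
          * exp (-(((r : ℂ) * exp (θ * I)) ^ d)) * (I * r * exp (θ * I)))
        + ∫ t in Ioi r, ((t : ℂ) * exp (2 * π * I * k / d)) ^ m * exp (-((t : ℂ) ^ d))
          * exp (2 * π * I * k / d) =
      (exp (2 * π * I / d) ^ (k * (m + 1)) - 1) * ((1 / d * Real.Gamma ((m + 1) / d) : ℝ) : ℂ) := by
  set φ : ℝ := 2 * π * k / d
  have hw : exp (φ * I) = exp (2 * π * I / d) ^ k := by
    rw [← Complex.exp_nat_mul]; push_cast [φ]; ring_nf
  have hpow (z : ℂ) : (z * exp (φ * I)) ^ d = z ^ d := by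
    rw [mul_pow, hw, ← pow_mul, mul_comm k d, pow_mul, (isPrimitiveRoot_exp d hd.ne').pow_eq_one,
      one_pow, mul_one]
  have hrot (t : ℝ) : ((t : ℂ) * exp (φ * I)) ^ m * exp (-((t : ℂ) ^ d)) * exp (φ * I) =
      exp (φ * I) ^ (m + 1) * ((t : ℂ) ^ m * exp (-((t : ℂ) ^ d))) := by ring
  have hint := integrableOn_Ioi_pow_mul_cexp_neg_pow m hd
  have h := integral_ray_arc_ray_eq_sub (f := fun z => z ^ m * exp (-(z ^ d))) (by fun_prop) hr φ
    hint (by simp only [hpow, hrot]; exact hint.const_mul _)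
  simp only [hpow, hrot, integral_const_mul, integral_Ioi_pow_mul_cexp_neg_pow m hd] at h
  rw [show 2 * π * I * k / d = (φ : ℂ) * I by push_cast [φ]; ring]
  simp only [hrot, integral_const_mul]
  rw [pow_mul, ← hw]
  linear_combination h

end PowMulExpNegPow

namespace Matrix

theorem det_succ_eq_mul_det_submatrix_of_row_zero {R : Type*} [CommRing R] {n : ℕ}
    (A : Matrix (Fin (n + 1)) (Fin (n + 1)) R) (hA : ∀ j ≠ 0, A 0 j = 0) :
    A.det = A 0 0 * (A.submatrix Fin.succ Fin.succ).det := by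
  rw [det_succ_row_zero, Fin.sum_univ_succ]
  simp [hA _ (Fin.succ_ne_zero _)]

end Matrix

open Matrix in
theorem IsPrimitiveRoot.det_pow_mul_sub_one_ne_zero {R : Type*} [CommRing R] [IsDomain R]
    {ζ : R} {n : ℕ} (hζ : IsPrimitiveRoot ζ (n + 1)) :
    (of fun k j : Fin n => ζ ^ (((k : ℕ) + 1) * ((j : ℕ) + 1)) - 1).det ≠ 0 := by
  set V := vandermonde fun i : Fin (n + 1) => ζ ^ (i : ℕ)
  set N : Matrix (Fin (n + 1)) (Fin (n + 1)) R :=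
    of fun i j => ζ ^ ((i : ℕ) * j) - if i = 0 then 0 else 1
  have hNV : N.det = V.det :=
    det_eq_of_forall_row_eq_smul_add_const (fun i => if i = 0 then 0 else -1) 0 rfl
      fun i j => by split_ifs <;> simp [N, V, vandermonde_apply, ← pow_mul, *]; ring
  have hV : V.det ≠ 0 := det_vandermonde_ne_zero_iff.mpr fun i j hij =>
    Fin.ext (hζ.pow_inj i.isLt j.isLt hij)
  have hsub : Nᵀ.submatrix Fin.succ Fin.succ =
      of fun k j : Fin n => ζ ^ (((k : ℕ) + 1) * ((j : ℕ) + 1)) - 1 := by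
    ext k j
    simp [N, mul_comm]
  rw [← hNV, ← det_transpose, Nᵀ.det_succ_eq_mul_det_submatrix_of_row_zero
    fun j hj => by simp [N, hj], hsub] at hV
  exact right_ne_zero_of_mul hV

/-- The `d × d` period matrix `Π` of the differentials `z^j e^{-z^d} dz`, `-1 ≤ j ≤ d-2`
(columns indexed by `jj : Fin d` with `j = jj - 1`), is nonsingular. Its row `k = 0`
consists of the integrals over a counterclockwise circle `|z| = r` around the puncture at
`∞`; for `1 ≤ k ≤ d-1` the row `k` consists of the integrals along the path `γ_k` joining
the ramification point `w*_0` to `w*_k` (from `+∞` to `r` along the positive real axis,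
counterclockwise along `|z| = r` from argument `0` to `2πk/d`, then out to `∞` along the
ray `arg z = 2πk/d`). -/
theorem period_matrix_nonsingular (d : ℕ) (hd : 1 ≤ d) (r : ℝ) (hr : 0 < r) :
    (Matrix.of fun k jj : Fin d =>
      if (k : ℕ) = 0 then
        (∮ z in C(0, r), z ^ ((jj : ℤ) - 1) * Complex.exp (-(z ^ d)))
      else
        -(∫ t in Set.Ioi r, (t : ℂ) ^ ((jj : ℤ) - 1) * Complex.exp (-((t : ℂ) ^ d)))
          + (∫ θ in (0 : ℝ)..(2 * π * (k : ℕ) / d),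
              ((r : ℂ) * Complex.exp (θ * Complex.I)) ^ ((jj : ℤ) - 1)
                * Complex.exp (-(((r : ℂ) * Complex.exp (θ * Complex.I)) ^ d))
                * (Complex.I * r * Complex.exp (θ * Complex.I)))
          + ∫ t in Set.Ioi r,
              ((t : ℂ) * Complex.exp (2 * (π : ℂ) * Complex.I * (k : ℕ) / d)) ^ ((jj : ℤ) - 1)
                * Complex.exp (-((t : ℂ) ^ d))
                * Complex.exp (2 * (π : ℂ) * Complex.I * (k : ℕ) / d)).det ≠ 0 := by
  obtain ⟨n, rfl⟩ : ∃ n, d = n + 1 := ⟨d - 1, by omega⟩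
  generalize hA : Matrix.of _ = A
  set ζ := exp (2 * π * I / (n + 1 : ℕ))
  set Γ : Fin n → ℂ := fun j => ((1 / (n + 1 : ℕ) * Real.Gamma ((j + 1) / (n + 1 : ℕ)) : ℝ) : ℂ)
  set W : Matrix (Fin n) (Fin n) ℂ := .of fun k j => ζ ^ (((k : ℕ) + 1) * ((j : ℕ) + 1)) - 1
  rw [A.det_succ_eq_mul_det_submatrix_of_row_zero fun j hj => ?row_zero]
  case row_zero =>
    simpa [← hA] using circleIntegral_zpow_mul_eq_zero (f := fun z => exp (-(z ^ (n + 1))))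
      (by fun_prop) hr.le (p := (j : ℤ) - 1) (by have := Fin.pos_iff_ne_zero.mpr hj; omega)
  have hA00 : A 0 0 = 2 * π * I := by
    simpa [← hA] using circleIntegral_zpow_neg_one_mul (f := fun z => exp (-(z ^ (n + 1))))
      (by fun_prop) hr
  have hsub : A.submatrix Fin.succ Fin.succ = .of fun k j => Γ j * W k j := by
    ext k j
    have hj : ((j.succ : ℕ) : ℤ) - 1 = (j : ℕ) := by simp
    rw [← hA, Matrix.submatrix_apply, Matrix.of_apply, if_neg (by simp), hj]
    simp only [zpow_natCast]
    rw [integral_ray_arc_ray_pow_mul_cexp_neg_pow j (by omega) k.succ hr.le]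
    simp only [Γ, W, ζ, Matrix.of_apply, Fin.val_succ]
    ring
  have hΓ (j : Fin n) : Γ j ≠ 0 := ofReal_ne_zero.mpr (by positivity)
  rw [hsub, Matrix.det_mul_row, hA00]
  exact mul_ne_zero (by simp [pi_ne_zero]) (mul_ne_zero (Finset.prod_ne_zero_iff.mpr fun j _ => hΓ j)
    (isPrimitiveRoot_exp _ n.succ_ne_zero).det_pow_mul_sub_one_ne_zero)
end
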